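/- For every 2×2 Hermitian matrix H, exp(i·H_U) = φ₂(exp(iH)), where H_U = [[2H₁₁, 0, √2 H₁₂], [0, 2H₂₂, √2 H₂₁], [√2 H₂₁, √2 H₁₂, H₁₁ + H₂₂]] and φ₂ is the two-photon map φ₂(S) = [[S₁₁², S₁₂², √2 S₁₁S₁₂], [S₂₁², S₂₂², √2 S₂₁S₂₂], [√2 S₁₁S₂₁, √2 S₁₂S₂₂, S₁₁S₂₂ + S₁₂S₂₁]]. -/

import Mathlib

open Matrix

attribute [local instance] Matrix.linftyOpNormedRing Matrix.linftyOpNormedAlgebra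

noncomputable def rt2 : ℂ := (Real.sqrt 2 : ℝ)

/-- The two-photon map `φ₂` sending a `2 × 2` matrix `S` to the `3 × 3` matrix
acting on the two-photon basis `|20⟩, |02⟩, |11⟩`. -/
noncomputable def phi2 (S : Matrix (Fin 2) (Fin 2) ℂ) : Matrix (Fin 3) (Fin 3) ℂ :=
  !![S 0 0 ^ 2, S 0 1 ^ 2, rt2 * S 0 0 * S 0 1;
     S 1 0 ^ 2, S 1 1 ^ 2, rt2 * S 1 0 * S 1 1;
     rt2 * S 0 0 * S 1 0, rt2 * S 0 1 * S 1 1, S 0 0 * S 1 1 + S 0 1 * S 1 0]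


/-- The two-photon Hamiltonian `H_U` associated to a one-photon Hamiltonian `H`. -/
noncomputable def HU (H : Matrix (Fin 2) (Fin 2) ℂ) : Matrix (Fin 3) (Fin 3) ℂ :=
  !![2 * H 0 0, 0, rt2 * H 0 1;
     0, 2 * H 1 1, rt2 * H 1 0;
     rt2 * H 1 0, rt2 * H 0 1, H 0 0 + H 1 1]

/-!
`φ₂(S)` is the compression `Vᵀ (S ⊗ S) V` of `S ⊗ S` to the symmetric subspace of `ℂ² ⊗ ℂ²`,
where the columns of `V` are the two-photon basis, and `H_U` is the compression of the Kronecker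
sum `K = H ⊗ 1 + 1 ⊗ H`. Since `K` leaves the symmetric subspace invariant, `K V = V H_U`, hence
`exp K · V = V · exp H_U`; and since the two summands of `K` commute, `exp K = exp H ⊗ exp H`. Hence `exp H_U = Vᵀ (exp H ⊗ exp H) V = φ₂(exp H)`.
-/

open NormedSpace Kronecker
open scoped Norms.Operator

namespace Matrix

variable {R : Type*} [RCLike R] {m n : Type*} [Fintype m] [DecidableEq m] [Fintype n]
  [DecidableEq n]

theorem exp_mul_eq_mul_exp {M : Matrix m m R} {N : Matrix n n R} {V : Matrix m n R}
    (h : M * V = V * N) : exp M * V = V * exp N := by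
  have hpow (k : ℕ) : M ^ k * V = V * N ^ k := by
    induction k with
    | zero => simp
    | succ k ih =>
      rw [pow_succ', Matrix.mul_assoc, ih, ← Matrix.mul_assoc, h, Matrix.mul_assoc, ← pow_succ']
  have hM := (exp_series_hasSum_exp' (𝕂 := ℚ) M).map (mulRightLinearMap m ℚ V)
    (continuous_id.matrix_mul continuous_const)
  have hN := (exp_series_hasSum_exp' (𝕂 := ℚ) N).map (mulLeftLinearMap n ℚ V)
    (continuous_const.matrix_mul continuous_id)
  simp only [Function.comp_def, map_smul, mulRightLinearMap_apply, mulLeftLinearMap_apply,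
    hpow] at hM hN
  exact hM.unique hN

theorem exp_reindex (e : m ≃ n) (A : Matrix m m R) : exp (reindex e e A) = reindex e e (exp A) :=
  (map_exp (reindexAlgEquiv ℚ R e) (continuous_id.matrix_reindex e e) A).symm

theorem exp_blockDiagonal_const (A : Matrix m m R) :
    exp (blockDiagonal fun _ : n => A) = blockDiagonal fun _ => exp A := by
  rw [exp_blockDiagonal]
  congr 1
  funext i
  exact map_exp (Pi.evalRingHom (fun _ : n => Matrix m m R) i) (continuous_apply i) _

theorem exp_kronecker_one (A : Matrix m m R) : exp (A ⊗ₖ (1 : Matrix n n R)) = exp A ⊗ₖ 1 := by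
  rw [kronecker_one, kronecker_one, exp_blockDiagonal_const]

theorem exp_one_kronecker (B : Matrix n n R) : exp ((1 : Matrix m m R) ⊗ₖ B) = 1 ⊗ₖ exp B := by
  rw [one_kronecker, one_kronecker, exp_reindex, exp_blockDiagonal_const]

theorem exp_kronecker_one_add_one_kronecker (A : Matrix m m R) (B : Matrix n n R) :
    exp (A ⊗ₖ 1 + 1 ⊗ₖ B) = exp A ⊗ₖ exp B := by
  have hcomm : Commute (A ⊗ₖ (1 : Matrix n n R)) ((1 : Matrix m m R) ⊗ₖ B) := by
    simp only [Commute, SemiconjBy, ← mul_kronecker_mul, Matrix.mul_one, Matrix.one_mul]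
  rw [exp_add_of_commute _ _ hcomm, exp_kronecker_one, exp_one_kronecker, ← mul_kronecker_mul,
    Matrix.mul_one, Matrix.one_mul]

end Matrix

theorem rt2_sq : rt2 ^ 2 = 2 := by
  rw [rt2, ← Complex.ofReal_pow, Real.sq_sqrt zero_le_two, Complex.ofReal_ofNat]

theorem inv_rt2 : rt2⁻¹ = rt2 / 2 := by
  have hne : rt2 ≠ 0 := by
    rintro h
    simpa [h] using rt2_sq
  field_simp
  exact rt2_sq.symm

/-- Row `(i, j)` is the `eᵢ ⊗ eⱼ` coordinate; the columns are `|20⟩ = e₀ ⊗ e₀`, `|02⟩ = e₁ ⊗ e₁`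
and `|11⟩ = (e₀ ⊗ e₁ + e₁ ⊗ e₀) / √2`, an orthonormal basis of the symmetric subspace. -/
noncomputable def symSqEmbedding : Matrix (Fin 2 × Fin 2) (Fin 3) ℂ :=
  of fun ij k => ![![![1, 0, 0], ![0, 0, rt2⁻¹]], ![![0, 0, rt2⁻¹], ![0, 1, 0]]] ij.1 ij.2 k

theorem symSqEmbedding_transpose_mul_self : symSqEmbeddingᵀ * symSqEmbedding = 1 := by
  ext i j
  fin_cases i <;> fin_cases j <;>
    simp [symSqEmbedding, mul_apply, Fintype.sum_prod_type, Fin.sum_univ_two, inv_rt2, one_apply]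
  all_goals grind [rt2_sq]

theorem phi2_eq_transpose_mul_kronecker_mul (S : Matrix (Fin 2) (Fin 2) ℂ) :
    phi2 S = symSqEmbeddingᵀ * (S ⊗ₖ S) * symSqEmbedding := by
  ext i j
  fin_cases i <;> fin_cases j <;>
    simp [phi2, symSqEmbedding, mul_apply, Fintype.sum_prod_type, Fin.sum_univ_two, inv_rt2]
  all_goals grind [rt2_sq]

theorem kroneckerSum_mul_symSqEmbedding (A : Matrix (Fin 2) (Fin 2) ℂ) :
    (A ⊗ₖ 1 + 1 ⊗ₖ A) * symSqEmbedding = symSqEmbedding * HU A := by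
  ext ⟨i, j⟩ k
  fin_cases i <;> fin_cases j <;> fin_cases k <;>
    simp [HU, symSqEmbedding, mul_apply, Fintype.sum_prod_type, Fin.sum_univ_two,
      Fin.sum_univ_three, inv_rt2, one_apply]
  all_goals grind [rt2_sq]

theorem exp_HU (A : Matrix (Fin 2) (Fin 2) ℂ) : exp (HU A) = phi2 (exp A) :=
  calc exp (HU A) = symSqEmbeddingᵀ * (symSqEmbedding * exp (HU A)) := by
        rw [← Matrix.mul_assoc, symSqEmbedding_transpose_mul_self, Matrix.one_mul]
    _ = symSqEmbeddingᵀ * (exp (A ⊗ₖ 1 + 1 ⊗ₖ A) * symSqEmbedding) := by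
        rw [exp_mul_eq_mul_exp (kroneckerSum_mul_symSqEmbedding A)]
    _ = phi2 (exp A) := by
        rw [exp_kronecker_one_add_one_kronecker, phi2_eq_transpose_mul_kronecker_mul,
          Matrix.mul_assoc]

theorem HU_smul (c : ℂ) (H : Matrix (Fin 2) (Fin 2) ℂ) : HU (c • H) = c • HU H := by
  ext i j
  fin_cases i <;> fin_cases j <;> simp [HU, mul_left_comm, mul_add]

theorem exp_HU_eq_phi2_exp_general (H : Matrix (Fin 2) (Fin 2) ℂ) :
    NormedSpace.exp (Complex.I • HU H) = phi2 (NormedSpace.exp (Complex.I • H)) := by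
  rw [← HU_smul, exp_HU]

/-- Exponentiating the two-photon Hamiltonian recovers the two-photon unitary:
`exp(i H_U) = φ₂(exp(i H))` for every Hermitian `H`. -/
theorem exp_HU_eq_phi2_exp (H : Matrix (Fin 2) (Fin 2) ℂ) (hH : H.IsHermitian) :
    NormedSpace.exp (Complex.I • HU H) = phi2 (NormedSpace.exp (Complex.I • H)) :=
  exp_HU_eq_phi2_exp_general H
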